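/- arXiv:1010.2442 — 2 statements merged into one kernel-verified Lean document; each statement's English description precedes it below -/
import Mathlib

section
/- Let s > 0 and x ∈ ℝⁿ. If ψ_s is differentiable at x, then ψ is differentiable at (s,x) (as a function of the n+1 variables (s,x)), and ∂ψ/∂s(s,x) = −u̇₀(∇ψ_s(x)). Consequently Δ(ψ) ∩ ((0,∞) × ℝⁿ) = ⋃_{s>0} {s} × Δ(ψ_s): the singular locus of ψ is the union over s of {s} times the singular locus of ψ_s. -/
noncomputable section

open Set MeasureTheory Topology Filter
open scoped RealInnerProductSpace Pointwise

/-- Euclidean space ℝⁿ. -/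
abbrev E (n : ℕ) := EuclideanSpace ℝ (Fin n)

/-- The affine functions `l_k(y) = ⟨y, v_k⟩ − λ_k` defining the polytope. -/
def lfun {n d : ℕ} (v : Fin d → E n) (lam : Fin d → ℝ) (k : Fin d) (y : E n) : ℝ :=
  ⟪y, v k⟫ - lam k

/-- The polytope `P = ⋂_k {l_k ≥ 0}`. -/
def Pset {n d : ℕ} (v : Fin d → E n) (lam : Fin d → ℝ) : Set (E n) :=
  {y | ∀ k, 0 ≤ lfun v lam k y}

/-- Guillemin's canonical symplectic potential `u_G = Σ l_k log l_k`
(note `Real.log 0 = 0`, so `t log t = 0` at `t = 0`). -/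
def uG {n d : ℕ} (v : Fin d → E n) (lam : Fin d → ℝ) (y : E n) : ℝ :=
  ∑ k, lfun v lam k y * Real.log (lfun v lam k y)

/-- The biconjugate (convex envelope) over `P`:
`g**(y) = sup {a(y) : a affine on ℝⁿ, a ≤ g on P}`. -/
def biconj {n : ℕ} (P : Set (E n)) (g : E n → ℝ) (y : E n) : ℝ :=
  sSup {r : ℝ | ∃ (a : E n →L[ℝ] ℝ) (c : ℝ), (∀ z ∈ P, a z + c ≤ g z) ∧ r = a y + c}

/-- The subdifferential of `g : P → ℝ` at `y`, relative to `P`. -/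
def subdiff {n : ℕ} (P : Set (E n)) (g : E n → ℝ) (y : E n) : Set (E n) :=
  {w | ∀ z ∈ P, g y + ⟪w, z - y⟫ ≤ g z}

/-- The subdifferential of a finite (convex) function on all of ℝⁿ. -/
def subdiffR {n : ℕ} (f : E n → ℝ) (x : E n) : Set (E n) :=
  {w | ∀ z, f x + ⟪w, z - x⟫ ≤ f z}

/-- The total subdifferential of `ψ(s,x)` at `(s,x)`, a subset of `ℝ × ℝⁿ = ℝ^{n+1}`. -/
def subdiffT {n : ℕ} (ψ : ℝ → E n → ℝ) (s : ℝ) (x : E n) : Set (ℝ × E n) :=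
  {w | ∀ t z, ψ s x + w.1 * (t - s) + ⟪w.2, z - x⟫ ≤ ψ t z}

/-- The set of reachable partial `x`-subgradients `γ_x ψ(s,x)`. -/
def reachable {n : ℕ} (ψ : ℝ → E n → ℝ) (s : ℝ) (x : E n) : Set (E n) :=
  {w | ∃ xk : ℕ → E n, (∀ k, DifferentiableAt ℝ (ψ s) (xk k)) ∧
    Tendsto xk atTop (𝓝 x) ∧
    Tendsto (fun k => gradient (ψ s) (xk k)) atTop (𝓝 w)}

/-- `P` is a compact Delzant polytope with nonempty interior, cut out by the `l_k`,
with all facets of dimension `n−1`, and every vertex lying on exactly `n` of the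
hyperplanes `{l_k = 0}` with linearly independent normals. -/
def GoodPolytope {n d : ℕ} (v : Fin d → E n) (lam : Fin d → ℝ) (P : Set (E n)) : Prop :=
  P = Pset v lam ∧ IsCompact P ∧ (interior P).Nonempty ∧
  (∀ k, Module.finrank ℝ (affineSpan ℝ (P ∩ {y | lfun v lam k y = 0})).direction = n - 1) ∧
  (∀ p ∈ Set.extremePoints ℝ P, ∃ K : Finset (Fin d), K.card = n ∧
    (∀ k, k ∈ K ↔ lfun v lam k p = 0) ∧ LinearIndependent ℝ (fun k : K => v ↑k))

/-- The Cauchy data: `u₀ − u_G` extends smoothly to a neighborhood of `P`, `u₀` is convex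
on `P`, smooth with positive definite Hessian on `int P`; `u̇₀` extends smoothly to a
neighborhood of `P`. -/
def GoodData {n d : ℕ} (v : Fin d → E n) (lam : Fin d → ℝ) (P : Set (E n))
    (u₀ udot : E n → ℝ) : Prop :=
  (∃ U : Set (E n), IsOpen U ∧ P ⊆ U ∧ ∃ F : E n → ℝ, ContDiffOn ℝ (⊤ : ℕ∞) F U ∧
    ∀ y ∈ P, u₀ y = uG v lam y + F y) ∧
  ConvexOn ℝ P u₀ ∧
  ContDiffOn ℝ (⊤ : ℕ∞) u₀ (interior P) ∧
  (∀ y ∈ interior P, ∀ w : E n, w ≠ 0 → 0 < ⟪(fderiv ℝ (gradient u₀) y) w, w⟫) ∧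
  (∃ U : Set (E n), IsOpen U ∧ P ⊆ U ∧ ContDiffOn ℝ (⊤ : ℕ∞) udot U)

/-!
Write `ψ(s, x) = sup_{y ∈ P} (⟪x, y⟫ - u₀ y - s u̇₀ y)`, a supremum of functions affine in `(s, x)`
indexed by the compact set `P`. A maximiser `y` at `(s, x)` gives an affine minorant of `ψ_s`
touching it at `x`, so `y = ∇ψ_s(x)` when `ψ_s` is differentiable at `x`: the maximiser is unique.
By compactness, maximisers at nearby parameters then converge to it, and `ψ` is squeezed between
the affine function of the maximiser at `(s, x)` and those of the nearby maximisers, whence `ψ` is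
differentiable at `(s, x)` with derivative `(-u̇₀ y, y)` (Danskin's theorem).
-/

section Danskin

variable {Q α : Type*} [TopologicalSpace α] [CompactSpace α]

theorem tendsto_maximizer_of_unique [TopologicalSpace Q] {f : Q → α → ℝ}
    (hf : Continuous (Function.uncurry f)) {Y : Q → α} (hY : ∀ q z, f q z ≤ f q (Y q))
    {q₀ : Q} (huniq : ∀ y, (∀ z, f q₀ z ≤ f q₀ y) → y = Y q₀) :
    Tendsto Y (𝓝 q₀) (𝓝 (Y q₀)) := by
  refine tendsto_nhds_of_unique_mapClusterPt fun y hy => huniq y fun z => ?_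
  by_contra! hlt
  have hnear : ∀ᶠ p in 𝓝 (q₀, y), f p.1 p.2 < f p.1 z :=
    hf.continuousAt.eventually_lt
      (hf.comp (continuous_fst.prodMk continuous_const)).continuousAt hlt
  rw [nhds_prod_eq] at hnear
  obtain ⟨near_q₀, h_q₀, near_y, h_y, hprod⟩ := eventually_prod_iff.mp hnear
  obtain ⟨q, hYq, hq⟩ := ((hy.frequently h_y).and_eventually h_q₀).exists
  exact (hprod hq hYq).not_ge (hY q z)

theorem hasFDerivAt_iSup_of_unique_maximizer [NormedAddCommGroup Q] [NormedSpace ℝ Q]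
    {ℓ : α → Q →L[ℝ] ℝ} {c : α → ℝ} (hℓ : Continuous ℓ) (hc : Continuous c) {q₀ : Q} {y₀ : α}
    (huniq : ∀ y, (∀ z, ℓ z q₀ - c z ≤ ℓ y q₀ - c y) → y = y₀) :
    HasFDerivAt (fun q => ⨆ y, ℓ y q - c y) (ℓ y₀) q₀ := by
  have : Nonempty α := ⟨y₀⟩
  set f : Q → α → ℝ := fun q y => ℓ y q - c y
  have hf : Continuous (Function.uncurry f) :=
    ((hℓ.comp continuous_snd).clm_apply continuous_fst).sub (hc.comp continuous_snd)
  have hmax : ∀ q, ∃ y, ∀ z, f q z ≤ f q y := fun q =>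
    (hf.comp (continuous_const.prodMk continuous_id)).exists_forall_ge (by simp)
  choose Y hY using hmax
  obtain rfl : Y q₀ = y₀ := huniq _ (hY q₀)
  have hval : ∀ q, (⨆ y, ℓ y q - c y) = f q (Y q) := fun q =>
    ciSup_eq_of_forall_le_of_forall_lt_exists_gt (hY q) fun _ hw => ⟨Y q, hw⟩
  have hε : Tendsto (fun q => ℓ (Y q) - ℓ (Y q₀)) (𝓝 q₀) (𝓝 0) := by
    rw [← sub_self (ℓ (Y q₀))]
    exact ((hℓ.tendsto _).comp (tendsto_maximizer_of_unique hf hY huniq)).sub_const _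
  have hbound : ∀ q, ‖f q (Y q) - f q₀ (Y q₀) - ℓ (Y q₀) (q - q₀)‖ ≤
      ‖ℓ (Y q) - ℓ (Y q₀)‖ * ‖q - q₀‖ := by
    intro q
    have hlower := hY q (Y q₀)
    have hupper := hY q₀ (Y q)
    have hlin : ((ℓ (Y q) - ℓ (Y q₀)) (q - q₀)) ≤ ‖ℓ (Y q) - ℓ (Y q₀)‖ * ‖q - q₀‖ :=
      (le_abs_self _).trans ((ℓ (Y q) - ℓ (Y q₀)).le_opNorm _)
    simp only [f, map_sub, sub_apply] at hlower hupper hlin ⊢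
    rw [Real.norm_eq_abs, abs_le]
    constructor <;> nlinarith [norm_nonneg (ℓ (Y q) - ℓ (Y q₀)), norm_nonneg (q - q₀)]
  refine HasFDerivAt.of_isLittleO ?_
  simp only [hval]
  rw [Asymptotics.isLittleO_iff]
  intro ε hε_pos
  filter_upwards [hε.eventually (Metric.closedBall_mem_nhds 0 hε_pos)] with q hq
  rw [dist_zero_right] at hq
  exact (hbound q).trans (mul_le_mul_of_nonneg_right hq (norm_nonneg _))

end Danskin

section Legendre

variable {F : Type*} [NormedAddCommGroup F] [InnerProductSpace ℝ F] [CompleteSpace F]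

theorem gradient_eq_of_forall_le {f : F → ℝ} {x y : F} (hf : DifferentiableAt ℝ f x)
    (hy : ∀ z, f x + ⟪y, z - x⟫ ≤ f z) : gradient f x = y := by
  have hmin : IsLocalMin (fun z => f z - innerSL ℝ y z) x := Eventually.of_forall fun z => by
    have := hy z
    simp only [innerSL_apply_apply, inner_sub_right] at this ⊢
    linarith
  have h0 := hmin.hasFDerivAt_eq_zero (hf.hasFDerivAt.sub (innerSL ℝ y).hasFDerivAt)
  refine (InnerProductSpace.toDual ℝ F).injective ?_
  rw [toDual_gradient, sub_eq_zero.mp h0]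
  rfl

theorem hasFDerivAt_uncurry_of_differentiableAt {P : Set F} (hPc : IsCompact P)
    (hPne : P.Nonempty) {u₀ udot : F → ℝ} (hu₀ : ContinuousOn u₀ P) (hudot : ContinuousOn udot P)
    {ψ : ℝ → F → ℝ} (hψ : ∀ s x, ψ s x = ⨆ y : P, ⟪x, (y : F)⟫ - (u₀ y + s * udot y))
    {s : ℝ} {x : F} (hx : DifferentiableAt ℝ (ψ s) x) :
    HasFDerivAt (fun q : ℝ × F => ψ q.1 q.2)
      ((innerSL ℝ (gradient (ψ s) x)).comp (.snd ℝ ℝ F) -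
        udot (gradient (ψ s) x) • .fst ℝ ℝ F) (s, x) := by
  have : CompactSpace P := isCompact_iff_compactSpace.mp hPc
  have : Nonempty P := hPne.to_subtype
  set ℓ : P → ℝ × F →L[ℝ] ℝ := fun y =>
    (innerSL ℝ (y : F)).comp (.snd ℝ ℝ F) - udot y • .fst ℝ ℝ F
  have hℓ : Continuous ℓ :=
    (((innerSL ℝ).continuous.comp continuous_subtype_val).clm_comp continuous_const).sub
      (hudot.domRestrict.smul continuous_const)
  have hψℓ : (fun q : ℝ × F => ψ q.1 q.2) = fun q => ⨆ y, ℓ y q - u₀ y := by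
    ext q
    simp only [hψ, ℓ, sub_apply, ContinuousLinearMap.comp_apply, innerSL_apply_apply, smul_apply,
      ContinuousLinearMap.coe_fst', ContinuousLinearMap.coe_snd', smul_eq_mul, real_inner_comm]
    congr! 2
    ring
  have hcont : ∀ q, Continuous fun y => ℓ y q - u₀ y := fun q =>
    (hℓ.clm_apply continuous_const).sub hu₀.domRestrict
  have hmax_eq_grad : ∀ y : P, (∀ z, ℓ z (s, x) - u₀ z ≤ ℓ y (s, x) - u₀ y) →
      (y : F) = gradient (ψ s) x := by
    intro y hy
    refine (gradient_eq_of_forall_le hx fun z => ?_).symm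
    rw [congrFun hψℓ (s, x), congrFun hψℓ (s, z),
      ciSup_eq_of_forall_le_of_forall_lt_exists_gt hy fun _ hw => ⟨y, hw⟩]
    refine le_trans (le_of_eq ?_) (le_ciSup (isCompact_range (hcont (s, z))).bddAbove y)
    simp only [ℓ, sub_apply, ContinuousLinearMap.comp_apply, innerSL_apply_apply, smul_apply,
      ContinuousLinearMap.coe_fst', ContinuousLinearMap.coe_snd', smul_eq_mul, inner_sub_right]
    ring
  obtain ⟨y₀, hy₀⟩ := (hcont (s, x)).exists_forall_ge (by simp)
  have hD := hasFDerivAt_iSup_of_unique_maximizer hℓ hu₀.domRestrict (y₀ := y₀) fun y hy =>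
    Subtype.ext ((hmax_eq_grad y hy).trans (hmax_eq_grad y₀ hy₀).symm)
  rw [hψℓ, ← hmax_eq_grad y₀ hy₀]
  exact hD

end Legendre

theorem continuous_uG {n d : ℕ} (v : Fin d → E n) (lam : Fin d → ℝ) : Continuous (uG v lam) :=
  continuous_finsetSum _ fun _ _ => Real.continuous_mul_log.comp
    ((continuous_id.inner continuous_const).sub continuous_const)

theorem GoodData.continuousOn {n d : ℕ} {v : Fin d → E n} {lam : Fin d → ℝ} {P : Set (E n)}
    {u₀ udot : E n → ℝ} (hD : GoodData v lam P u₀ udot) :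
    ContinuousOn u₀ P ∧ ContinuousOn udot P := by
  obtain ⟨⟨U, -, hPU, G, hG, hu₀G⟩, -, -, -, V, -, hPV, hudot⟩ := hD
  exact ⟨((continuous_uG v lam).continuousOn.add (hG.continuousOn.mono hPU)).congr hu₀G,
    hudot.continuousOn.mono hPV⟩

theorem partial_C1_regularity_general
    {n d : ℕ}
    (v : Fin d → E n) (lam : Fin d → ℝ) (P : Set (E n))
    (hP : GoodPolytope v lam P)
    (u₀ udot : E n → ℝ) (hD : GoodData v lam P u₀ udot)
    (u : ℝ → E n → ℝ) (hu : ∀ s y, u s y = u₀ y + s * udot y)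
    (ψ : ℝ → E n → ℝ) (hψ : ∀ s x, ψ s x = sSup {r : ℝ | ∃ y ∈ P, r = ⟪x, y⟫ - u s y}) :
    (∀ s : ℝ, 0 < s → ∀ x : E n, DifferentiableAt ℝ (ψ s) x →
      DifferentiableAt ℝ (fun q : ℝ × E n => ψ q.1 q.2) (s, x) ∧
      deriv (fun t => ψ t x) s = - udot (gradient (ψ s) x)) ∧
    {p : ℝ × E n | 0 < p.1 ∧ DifferentiableAt ℝ (fun q : ℝ × E n => ψ q.1 q.2) p}
      = ⋃ s ∈ Ioi (0:ℝ), ({s} : Set ℝ) ×ˢ {x : E n | DifferentiableAt ℝ (ψ s) x} := by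
  obtain ⟨-, hPc, hPint, -, -⟩ := hP
  obtain ⟨hu₀, hudot⟩ := hD.continuousOn
  have hψ' : ∀ s x, ψ s x = ⨆ y : P, ⟪x, (y : E n)⟫ - (u₀ y + s * udot y) := fun s x => by
    rw [hψ, ← sSup_image' (f := fun y => ⟪x, y⟫ - (u₀ y + s * udot y))]
    congr 1
    ext r
    simp [hu, eq_comm]
  have hFD := fun s x => hasFDerivAt_uncurry_of_differentiableAt hPc (hPint.mono interior_subset)
    hu₀ hudot hψ' (s := s) (x := x)
  have hdiff : ∀ s x, DifferentiableAt ℝ (ψ s) x →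
      DifferentiableAt ℝ (fun q : ℝ × E n => ψ q.1 q.2) (s, x) := fun s x hx =>
    (hFD s x hx).differentiableAt
  refine ⟨fun s _ x hx => ⟨hdiff s x hx, ?_⟩, ?_⟩
  · have := (hFD s x hx).comp_hasDerivAt s ((hasDerivAt_id s).prodMk (hasDerivAt_const s x))
    simpa [Function.comp_def] using this.deriv
  ext ⟨s, x⟩
  simp only [mem_ofPred_eq, mem_iUnion, mem_prod, mem_singleton_iff, mem_Ioi, exists_prop]
  constructor
  · rintro ⟨hs, hΨ⟩
    exact ⟨s, hs, rfl, hΨ.comp x ((differentiableAt_const s).prodMk differentiableAt_id)⟩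
  · rintro ⟨s, hs, rfl, hx⟩
    exact ⟨hs, hdiff _ x hx⟩

/-- If `ψ_s` is differentiable at `x` (`s > 0`), then `ψ` is
differentiable at `(s,x)` and `∂ψ/∂s(s,x) = −u̇₀(∇ψ_s(x))`; consequently the regular
locus of `ψ` over `(0,∞) × ℝⁿ` is the indexed union of the regular loci of the `ψ_s`. -/
theorem partial_C1_regularity
    {n d : ℕ} (hn : 1 ≤ n)
    (v : Fin d → E n) (lam : Fin d → ℝ) (P : Set (E n))
    (hP : GoodPolytope v lam P)
    (u₀ udot : E n → ℝ) (hD : GoodData v lam P u₀ udot)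
    (u : ℝ → E n → ℝ) (hu : ∀ s y, u s y = u₀ y + s * udot y)
    (A : ℝ → Set (E n)) (hA : ∀ s, A s = {y ∈ P | u s y ≠ biconj P (u s) y})
    (ψ : ℝ → E n → ℝ) (hψ : ∀ s x, ψ s x = sSup {r : ℝ | ∃ y ∈ P, r = ⟪x, y⟫ - u s y}) :
    (∀ s : ℝ, 0 < s → ∀ x : E n, DifferentiableAt ℝ (ψ s) x →
      DifferentiableAt ℝ (fun q : ℝ × E n => ψ q.1 q.2) (s, x) ∧
      deriv (fun t => ψ t x) s = - udot (gradient (ψ s) x)) ∧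
    {p : ℝ × E n | 0 < p.1 ∧ DifferentiableAt ℝ (fun q : ℝ × E n => ψ q.1 q.2) p}
      = ⋃ s ∈ Ioi (0:ℝ), ({s} : Set ℝ) ×ˢ {x : E n | DifferentiableAt ℝ (ψ s) x} :=
  partial_C1_regularity_general v lam P hP u₀ udot hD u hu ψ hψ
end
end

section
/- Let s > 0, y ∈ A_s ∖ ∂P, and x := ∇u_s**(y). Then co{(−u̇₀(v), v) : v ∈ γ_xψ(s,x)} ⊂ ∂ψ(s,x) ⊂ co{(−u̇₀(v), v) : v ∈ ∂_xψ(s,x)}, where co denotes the convex hull in ℝ^{n+1} and ∂ψ(s,x) is the total subdifferential of ψ at (s,x). -/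
noncomputable section

open Set MeasureTheory Topology Filter
open scoped RealInnerProductSpace Pointwise

/-! `ψ(t, z)` is the maximum over the compact set `P` of the affine functions
`(t, z) ↦ ⟪z, y⟫ - u₀ y - t * u̇₀ y`, with gradients `(-u̇₀ y, y)`. Each maximizer `y` at `(s, x)`
gives an affine minorant of `ψ` touching it at `(s, x)`, so `(-u̇₀ y, y) ∈ ∂ψ(s, x)` and
`y ∈ ∂_x ψ(s, x)`; gradients at points of differentiability are maximizers, and limits of
maximizers are maximizers, which gives the first inclusion. For the second (Danskin), a
subgradient `p` and a direction `d` yield maximizers at `(s, x) + ε d` whose gradients pair with `d`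
at least as much as `p` does; a limit point is a maximizer at `(s, x)`, so no hyperplane separates
`p` from the compact convex hull of the gradients of the maximizers.
-/
theorem isCompact_convexHull {V : Type*} [NormedAddCommGroup V] [NormedSpace ℝ V]
    [FiniteDimensional ℝ V] {s : Set V} (hs : IsCompact s) : IsCompact (convexHull ℝ s) := by
  -- Carathéodory: a point of the hull is a convex combination of at most `finrank + 1` points.
  have hunion : convexHull ℝ s = ⋃ k : Fin (Module.finrank ℝ V + 2),
      (fun q : (Fin k → ℝ) × (Fin k → V) => ∑ i, q.1 i • q.2 i) ''
        (stdSimplex ℝ (Fin k) ×ˢ univ.pi fun _ => s) := by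
    refine Subset.antisymm (fun p hp => ?_) (iUnion_subset fun k => ?_)
    · obtain ⟨ι, _, z, w, hzs, hz, hw0, hw1, rfl⟩ := eq_pos_convex_span_of_mem_convexHull hp
      let e := Fintype.equivFin ι
      have hcard : Fintype.card ι < Module.finrank ℝ V + 2 := by
        have := hz.card_le_finrank_succ
        have := Submodule.finrank_le (vectorSpan ℝ (range z))
        omega
      refine mem_iUnion.2 ⟨⟨_, hcard⟩, (w ∘ e.symm, z ∘ e.symm),
        ⟨⟨fun i => (hw0 _).le, ?_⟩, fun i _ => hzs (mem_range_self _)⟩, ?_⟩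
      · exact (e.symm.sum_comp w).trans hw1
      · exact e.symm.sum_comp fun i => w i • z i
    · rintro - ⟨q, ⟨⟨hq0, hq1⟩, hqs⟩, rfl⟩
      exact (convex_convexHull ℝ s).sum_mem (fun i _ => hq0 i) hq1
        fun i _ => subset_convexHull ℝ s (hqs i (mem_univ i))
  rw [hunion]
  exact isCompact_iUnion fun k =>
    ((isCompact_stdSimplex ℝ _).prod (isCompact_univ_pi fun _ => hs)).image (by fun_prop)

theorem mem_convexHull_of_forall_exists_le {F : Type*} [NormedAddCommGroup F]
    [InnerProductSpace ℝ F] [FiniteDimensional ℝ F] {S : Set (ℝ × F)} (hS : IsCompact S)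
    {p : ℝ × F} (h : ∀ (τ : ℝ) (ζ : F), ∃ q ∈ S, p.1 * τ + ⟪p.2, ζ⟫ ≤ q.1 * τ + ⟪q.2, ζ⟫) :
    p ∈ convexHull ℝ S := by
  by_contra hp
  obtain ⟨f, c, hfS, hcp⟩ :=
    geometric_hahn_banach_closed_point (convex_convexHull ℝ S)
      (isCompact_convexHull hS).isClosed hp
  set ζ := (InnerProductSpace.toDual ℝ F).symm (f ∘L .inr ℝ ℝ F)
  have hf : ∀ q : ℝ × F, f q = q.1 * f (1, 0) + ⟪ζ, q.2⟫ := by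
    intro q
    have hq : f q = f (q.1 • ((1 : ℝ), (0 : F))) + f ((0 : ℝ), q.2) := by
      rw [← map_add]; congr 1; ext <;> simp
    rw [hq, map_smul, smul_eq_mul, InnerProductSpace.toDual_symm_apply]
    rfl
  obtain ⟨q, hqS, hq⟩ := h (f (1, 0)) ζ
  have hfq := hfS q (subset_convexHull ℝ S hqS)
  rw [hf, real_inner_comm] at hcp
  rw [hf, real_inner_comm] at hfq
  linarith

theorem gradient_eq_of_forall_le_s19 {F : Type*} [NormedAddCommGroup F] [InnerProductSpace ℝ F]
    [CompleteSpace F] {g : F → ℝ} {x₀ y₀ : F} (hd : DifferentiableAt ℝ g x₀)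
    (hsub : ∀ z, g x₀ + ⟪y₀, z - x₀⟫ ≤ g z) : gradient g x₀ = y₀ := by
  have hmin : IsLocalMin (fun z => g z - InnerProductSpace.toDual ℝ F y₀ z) x₀ :=
    Eventually.of_forall fun z => by
      have := hsub z
      simp only [InnerProductSpace.toDual_apply_apply, inner_sub_right] at this ⊢
      linarith
  have hzero := hmin.hasFDerivAt_eq_zero
    (hd.hasGradientAt.hasFDerivAt.sub (InnerProductSpace.toDual ℝ F y₀).hasFDerivAt)
  rwa [← map_sub, LinearIsometryEquiv.map_eq_zero_iff, sub_eq_zero] at hzero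

section Legendre

variable {F : Type*} [NormedAddCommGroup F] [InnerProductSpace ℝ F] {K : Set F}

def legendreOn (K : Set F) (f : F → ℝ) (z : F) : ℝ :=
  sSup ((fun y => ⟪z, y⟫ - f y) '' K)

def maximizers (K : Set F) (f : F → ℝ) (z : F) : Set F :=
  {y ∈ K | ⟪z, y⟫ - f y = legendreOn K f z}

section Single

variable {f : F → ℝ} (hK : IsCompact K) (hf : ContinuousOn f K)
include hK hf

theorem le_legendreOn {y : F} (hy : y ∈ K) (z : F) : ⟪z, y⟫ - f y ≤ legendreOn K f z :=
  le_csSup (hK.bddAbove_image (by fun_prop)) (mem_image_of_mem _ hy)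

theorem maximizers_nonempty (hne : K.Nonempty) (z : F) : (maximizers K f z).Nonempty := by
  obtain ⟨y, hy, hmax⟩ :=
    hK.exists_sSup_image_eq hne (f := fun y => ⟪z, y⟫ - f y) (by fun_prop)
  exact ⟨y, hy, hmax.symm⟩

theorem isCompact_maximizers (z : F) : IsCompact (maximizers K f z) :=
  hK.of_isClosed_subset
    ((ContinuousOn.preimage_isClosed_of_isClosed (by fun_prop) hK.isClosed isClosed_singleton))
    (sep_subset _ _)

end Single

variable {a b : F → ℝ} (hK : IsCompact K) (ha : ContinuousOn a K) (hb : ContinuousOn b K)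
include hK ha hb

theorem continuous_legendreOn_add_smul :
    Continuous fun q : ℝ × F => legendreOn K (a + q.1 • b) q.2 := by
  have : CompactSpace K := isCompact_iff_compactSpace.mp hK
  have hcont : Continuous ↿fun (q : ℝ × F) (y : K) => ⟪q.2, (y : F)⟫ - (a y + q.1 * b y) :=
    (continuous_fst.snd.inner (continuous_subtype_val.comp continuous_snd)).sub
      ((ha.domRestrict.comp continuous_snd).add
        (continuous_fst.fst.mul (hb.domRestrict.comp continuous_snd)))
  convert isCompact_univ.continuous_sSup hcont using 2 with q
  rw [legendreOn, image_univ, image_eq_range]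
  rfl

theorem mem_maximizers_of_tendsto {t : ℕ → ℝ} {z y : ℕ → F} {s : ℝ} {x w : F}
    (ht : Tendsto t atTop (𝓝 s)) (hz : Tendsto z atTop (𝓝 x)) (hy : Tendsto y atTop (𝓝 w))
    (hmax : ∀ k, y k ∈ maximizers K (a + t k • b) (z k)) :
    w ∈ maximizers K (a + s • b) x := by
  have hwK : w ∈ K := hK.isClosed.mem_of_tendsto hy (Eventually.of_forall fun k => (hmax k).1)
  have hyK : Tendsto y atTop (𝓝[K] w) :=
    tendsto_nhdsWithin_iff.2 ⟨hy, Eventually.of_forall fun k => (hmax k).1⟩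
  have hval : Tendsto (fun k => ⟪z k, y k⟫ - (a + t k • b) (y k)) atTop
      (𝓝 (⟪x, w⟫ - (a + s • b) w)) :=
    (hz.inner hy).sub (((ha w hwK).tendsto.comp hyK).add
      (ht.smul ((hb w hwK).tendsto.comp hyK)))
  have hsup : Tendsto (fun k => legendreOn K (a + t k • b) (z k)) atTop
      (𝓝 (legendreOn K (a + s • b) x)) :=
    ((continuous_legendreOn_add_smul hK ha hb).tendsto (s, x)).comp (ht.prodMk_nhds hz)
  exact ⟨hwK, tendsto_nhds_unique hval (hsup.congr fun k => ((hmax k).2).symm)⟩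

end Legendre

section Subdifferential

variable {n : ℕ}

theorem convex_subdiffT (ψ : ℝ → E n → ℝ) (s : ℝ) (x : E n) :
    Convex ℝ (subdiffT ψ s x) := by
  intro p hp q hq α β hα hβ hαβ t z
  have := add_le_add (mul_le_mul_of_nonneg_left (hp t z) hα)
    (mul_le_mul_of_nonneg_left (hq t z) hβ)
  simp only [Prod.fst_add, Prod.snd_add, Prod.smul_fst, Prod.smul_snd, smul_eq_mul,
    inner_add_left, real_inner_smul_left]
  linear_combination this + (ψ t z - ψ s x) * hαβ

theorem mem_subdiffR_of_mem_subdiffT {ψ : ℝ → E n → ℝ} {s : ℝ} {x : E n} {p : ℝ × E n}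
    (hp : p ∈ subdiffT ψ s x) : p.2 ∈ subdiffR (ψ s) x :=
  fun z => by simpa using hp s z

variable {K : Set (E n)} {a b : E n → ℝ} (hK : IsCompact K) (ha : ContinuousOn a K)
  (hb : ContinuousOn b K)
include hK ha hb

theorem mem_subdiffT_of_mem_maximizers {s : ℝ} {x y : E n}
    (hy : y ∈ maximizers K (a + s • b) x) :
    (-b y, y) ∈ subdiffT (fun t => legendreOn K (a + t • b)) s x := by
  intro t z
  have hle := le_legendreOn hK (ha.add (hb.const_smul t)) hy.1 z
  have hinner : ⟪y, z - x⟫ = ⟪z, y⟫ - ⟪x, y⟫ := by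
    rw [inner_sub_right, real_inner_comm y z, real_inner_comm y x]
  simp only [← hy.2, Pi.add_apply, Pi.smul_apply, smul_eq_mul, hinner] at hle ⊢
  linarith

theorem gradient_mem_maximizers (hne : K.Nonempty) {s : ℝ} {x : E n}
    (hd : DifferentiableAt ℝ (legendreOn K (a + s • b)) x) :
    gradient (legendreOn K (a + s • b)) x ∈ maximizers K (a + s • b) x := by
  obtain ⟨y, hy⟩ := maximizers_nonempty hK (ha.add (hb.const_smul s)) hne x
  rwa [gradient_eq_of_forall_le_s19 hd
    (mem_subdiffR_of_mem_subdiffT (mem_subdiffT_of_mem_maximizers hK ha hb hy))]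

theorem reachable_subset_maximizers (hne : K.Nonempty) (s : ℝ) (x : E n) :
    reachable (fun t => legendreOn K (a + t • b)) s x ⊆ maximizers K (a + s • b) x := by
  rintro w ⟨xk, hd, hxk, hw⟩
  exact mem_maximizers_of_tendsto hK ha hb tendsto_const_nhds hxk hw
    fun k => gradient_mem_maximizers hK ha hb hne (hd k)

theorem pairing_le_of_mem_maximizers {s ε τ : ℝ} {x ζ y : E n} {p : ℝ × E n}
    (hp : p ∈ subdiffT (fun t => legendreOn K (a + t • b)) s x) (hε : 0 < ε)
    (hy : y ∈ maximizers K (a + (s + ε * τ) • b) (x + ε • ζ)) :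
    p.1 * τ + ⟪p.2, ζ⟫ ≤ -b y * τ + ⟪y, ζ⟫ := by
  have hsub := hp (s + ε * τ) (x + ε • ζ)
  have hle := le_legendreOn hK (ha.add (hb.const_smul s)) hy.1 x
  simp only [← hy.2, Pi.add_apply, Pi.smul_apply, smul_eq_mul, add_sub_cancel_left,
    inner_add_left, real_inner_smul_left, real_inner_smul_right, real_inner_comm y ζ]
    at hsub hle
  have : ε * (p.1 * τ + ⟪p.2, ζ⟫) ≤ ε * (-b y * τ + ⟪y, ζ⟫) := by linarith
  exact le_of_mul_le_mul_left this hε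

theorem exists_mem_maximizers_pairing_ge (hne : K.Nonempty) {s : ℝ} {x : E n} {p : ℝ × E n}
    (hp : p ∈ subdiffT (fun t => legendreOn K (a + t • b)) s x) (τ : ℝ) (ζ : E n) :
    ∃ y ∈ maximizers K (a + s • b) x, p.1 * τ + ⟪p.2, ζ⟫ ≤ -b y * τ + ⟪y, ζ⟫ := by
  set ε : ℕ → ℝ := fun k => 1 / (k + 1)
  choose y hy using fun k =>
    maximizers_nonempty hK (ha.add (hb.const_smul (s + ε k * τ))) hne (x + ε k • ζ)
  obtain ⟨w, hwK, φ, hφ, hyφ⟩ := hK.tendsto_subseq fun k => (hy k).1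
  have hε : Tendsto (fun k => ε (φ k)) atTop (𝓝 0) :=
    tendsto_one_div_add_atTop_nhds_zero_nat.comp hφ.tendsto_atTop
  have hw : w ∈ maximizers K (a + s • b) x :=
    mem_maximizers_of_tendsto hK ha hb
      (by simpa using tendsto_const_nhds.add (hε.mul_const τ))
      (by simpa using tendsto_const_nhds.add (hε.smul_const ζ)) hyφ fun k => hy (φ k)
  have hyK : Tendsto (fun k => y (φ k)) atTop (𝓝[K] w) :=
    tendsto_nhdsWithin_iff.2 ⟨hyφ, Eventually.of_forall fun k => (hy (φ k)).1⟩
  refine ⟨w, hw, ge_of_tendsto' (x := atTop) ?_ fun k =>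
    pairing_le_of_mem_maximizers hK ha hb hp (by positivity) (hy (φ k))⟩
  exact (((hb w hwK).tendsto.comp hyK).neg.mul_const τ).add (hyφ.inner tendsto_const_nhds)

theorem subdiffT_subset_convexHull_maximizers (hne : K.Nonempty) (s : ℝ) (x : E n) :
    subdiffT (fun t => legendreOn K (a + t • b)) s x ⊆
      convexHull ℝ ((fun y => (-b y, y)) '' maximizers K (a + s • b) x) := by
  intro p hp
  refine mem_convexHull_of_forall_exists_le ?_ fun τ ζ => ?_
  · exact (isCompact_maximizers hK (ha.add (hb.const_smul s)) x).image_of_continuousOn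
      ((hb.neg.prodMk continuousOn_id).mono (sep_subset _ _))
  · obtain ⟨y, hy, hle⟩ := exists_mem_maximizers_pairing_ge hK ha hb hne hp τ ζ
    exact ⟨_, mem_image_of_mem _ hy, hle⟩

end Subdifferential

theorem total_subdifferential_bounds_general
    {n d : ℕ}
    (v : Fin d → E n) (lam : Fin d → ℝ) (P : Set (E n))
    (hP : GoodPolytope v lam P)
    (u₀ udot : E n → ℝ) (hD : GoodData v lam P u₀ udot)
    (u : ℝ → E n → ℝ) (hu : ∀ s y, u s y = u₀ y + s * udot y)
    (ψ : ℝ → E n → ℝ) (hψ : ∀ s x, ψ s x = sSup {r : ℝ | ∃ y ∈ P, r = ⟪x, y⟫ - u s y})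
    (s : ℝ) (y : E n)
    (x : E n) :
    convexHull ℝ ((fun w => (-udot w, w)) '' reachable ψ s x) ⊆ subdiffT ψ s x ∧
    subdiffT ψ s x ⊆ convexHull ℝ ((fun w => (-udot w, w)) '' subdiffR (ψ s) x) := by
  obtain ⟨-, hPc, hPint, -, -⟩ := hP
  obtain ⟨⟨U, -, hPU, F, hF, hu₀F⟩, -, -, -, U', -, hPU', hudotU⟩ := hD
  have hne : P.Nonempty := hPint.mono interior_subset
  have hu₀ : ContinuousOn u₀ P :=
    ((continuous_uG v lam).continuousOn.add (hF.continuousOn.mono hPU)).congr hu₀F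
  have hudot : ContinuousOn udot P := hudotU.continuousOn.mono hPU'
  obtain rfl : ψ = fun t => legendreOn P (u₀ + t • udot) := by
    ext t z
    rw [hψ, legendreOn]
    congr 1
    ext r
    simp [hu, eq_comm]
  refine ⟨convexHull_min ?_ (convex_subdiffT _ s x),
    (subdiffT_subset_convexHull_maximizers hPc hu₀ hudot hne s x).trans
      (convexHull_mono (image_mono fun w hw => ?_))⟩
  · rintro - ⟨w, hw, rfl⟩
    exact mem_subdiffT_of_mem_maximizers hPc hu₀ hudot
      (reachable_subset_maximizers hPc hu₀ hudot hne s x hw)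
  · exact mem_subdiffR_of_mem_subdiffT (mem_subdiffT_of_mem_maximizers hPc hu₀ hudot hw)

/-- For `s > 0`, `y ∈ A_s ∖ ∂P` and `x = ∇u_s**(y)`:
`co{(−u̇₀(v), v) : v ∈ γ_x ψ(s,x)} ⊆ ∂ψ(s,x) ⊆ co{(−u̇₀(v), v) : v ∈ ∂_x ψ(s,x)}`. -/
theorem total_subdifferential_bounds
    {n d : ℕ} (hn : 1 ≤ n)
    (v : Fin d → E n) (lam : Fin d → ℝ) (P : Set (E n))
    (hP : GoodPolytope v lam P)
    (u₀ udot : E n → ℝ) (hD : GoodData v lam P u₀ udot)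
    (u : ℝ → E n → ℝ) (hu : ∀ s y, u s y = u₀ y + s * udot y)
    (A : ℝ → Set (E n)) (hA : ∀ s, A s = {y ∈ P | u s y ≠ biconj P (u s) y})
    (ψ : ℝ → E n → ℝ) (hψ : ∀ s x, ψ s x = sSup {r : ℝ | ∃ y ∈ P, r = ⟪x, y⟫ - u s y})
    (s : ℝ) (hs : 0 < s) (y : E n) (hy : y ∈ A s \ frontier P)
    (x : E n) (hx : x = gradient (biconj P (u s)) y) :
    convexHull ℝ ((fun w => (-udot w, w)) '' reachable ψ s x) ⊆ subdiffT ψ s x ∧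
    subdiffT ψ s x ⊆ convexHull ℝ ((fun w => (-udot w, w)) '' subdiffR (ψ s) x) :=
  total_subdifferential_bounds_general v lam P hP u₀ udot hD u hu ψ hψ s y x
end
end
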